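/- arXiv:math/0005013 — 2 statements merged into one kernel-verified Lean document; each statement's English description precedes it below -/
import Mathlib

section
/- Let K be a compact metric space and f a Baire class one function on K such that β(f,ε) ≤ β₀ for some countable ordinal β₀ ≥ 1 and some ε > 0. Then there exists g : K → ℝ with ‖g − f‖_∞ ≤ ε and β(g) ≤ β₀. -/
open Filter Topology Set Ordinal

noncomputable section

/-- One step of the oscillation derivation of `A` with respect to `f` and `ε`. -/
def oscStep {K : Type*} [TopologicalSpace K] (f : K → ℝ) (ε : ℝ) (A : Set K) : Set K :=
  {x ∈ A | ∀ U : Set K, IsOpen U → x ∈ U →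
    ∃ x₁ ∈ U ∩ A, ∃ x₂ ∈ U ∩ A, ε ≤ |f x₁ - f x₂|}

/-- The transfinite oscillation derivatives `H^α(f, ε)`. -/
def oscDeriv {K : Type*} [TopologicalSpace K] (f : K → ℝ) (ε : ℝ) (H : Set K) :
    Ordinal → Set K := fun α =>
  Ordinal.limitRecOn α H (fun _ ih => oscStep f ε ih)
    (fun _ _ ih => ⋂ (β : Ordinal) (h : _), ih β h)

/-- One step of the convergence derivation of `A` for a sequence `f`. -/
def seqStep {K : Type*} [TopologicalSpace K] (f : ℕ → K → ℝ) (ε : ℝ) (A : Set K) : Set K :=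
  {x ∈ A | ∀ U : Set K, IsOpen U → x ∈ U → ∀ m : ℕ,
    ∃ n₁ n₂ : ℕ, m < n₂ ∧ n₂ < n₁ ∧ ∃ x' ∈ U ∩ A, ε ≤ |f n₁ x' - f n₂ x'|}

/-- The transfinite convergence derivatives `H^α((fₙ), ε)`. -/
def seqDeriv {K : Type*} [TopologicalSpace K] (f : ℕ → K → ℝ) (ε : ℝ) (H : Set K) :
    Ordinal → Set K := fun α =>
  Ordinal.limitRecOn α H (fun _ ih => seqStep f ε ih)
    (fun _ _ ih => ⋂ (β : Ordinal) (h : _), ih β h)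

open Classical in
/-- The least ordinal at which the family `S` is empty, and `ω₁` if there is none. -/
def emptyIndex {K : Type*} (S : Ordinal → Set K) : Ordinal :=
  if _ : ∃ α, S α = ∅ then sInf {α | S α = ∅} else (Cardinal.aleph 1).ord

/-- The oscillation index `β_H(f, ε)`. -/
def betaEpsOn {K : Type*} [TopologicalSpace K] (f : K → ℝ) (ε : ℝ) (H : Set K) : Ordinal :=
  emptyIndex (oscDeriv f ε H)

/-- The oscillation index `β_H(f)`. -/
def betaOn {K : Type*} [TopologicalSpace K] (f : K → ℝ) (H : Set K) : Ordinal :=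
  ⨆ ε : {e : ℝ // 0 < e}, betaEpsOn f ε.1 H

/-- The oscillation index `β(f)` over the whole space. -/
def beta {K : Type*} [TopologicalSpace K] (f : K → ℝ) : Ordinal :=
  betaOn f Set.univ

/-- The convergence index `γ_H((fₙ), ε)`. -/
def gammaEpsOn {K : Type*} [TopologicalSpace K] (f : ℕ → K → ℝ) (ε : ℝ) (H : Set K) : Ordinal :=
  emptyIndex (seqDeriv f ε H)

/-- The convergence index `γ_H((fₙ))`. -/
def gammaOn {K : Type*} [TopologicalSpace K] (f : ℕ → K → ℝ) (H : Set K) : Ordinal :=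
  ⨆ ε : {e : ℝ // 0 < e}, gammaEpsOn f ε.1 H

/-- The convergence index `γ((fₙ))` over the whole space. -/
def gamma {K : Type*} [TopologicalSpace K] (f : ℕ → K → ℝ) : Ordinal :=
  gammaOn f Set.univ

/-- A function is of Baire class one if it is a pointwise limit of continuous functions. -/
def BaireOne {K : Type*} [TopologicalSpace K] (f : K → ℝ) : Prop :=
  ∃ F : ℕ → K → ℝ, (∀ n, Continuous (F n)) ∧
    ∀ x, Tendsto (fun n => F n x) atTop (nhds (f x))

/-- `f` is of Baire class one on the subspace `F`. -/
def BaireOneOn {K : Type*} [TopologicalSpace K] (f : K → ℝ) (F : Set K) : Prop :=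
  ∃ g : ℕ → F → ℝ, (∀ n, Continuous (g n)) ∧
    ∀ x : F, Tendsto (fun n => g n x) atTop (nhds (f x))

/-- `g` is a convex block combination of `f`. -/
def ConvexBlockOf {K : Type*} (g f : ℕ → K → ℝ) : Prop :=
  ∃ a : ℕ → ℝ, ∃ p : ℕ → ℕ, (∀ k, 0 ≤ a k) ∧ StrictMono p ∧ p 0 = 0 ∧
    (∀ n, ∑ k ∈ Finset.Ioc (p n) (p (n + 1)), a k = 1) ∧
    ∀ n x, g n x = ∑ k ∈ Finset.Ioc (p n) (p (n + 1)), a k * f k x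

end

section Aux
variable {K : Type*} [TopologicalSpace K] (f : K → ℝ) (ε : ℝ)

theorem oscStep_subset (A : Set K) : oscStep f ε A ⊆ A := fun _ hx => hx.1

theorem oscDeriv_zero (H : Set K) : oscDeriv f ε H 0 = H := Ordinal.limitRecOn_zero ..

theorem oscDeriv_succ (H : Set K) (α : Ordinal) :
    oscDeriv f ε H (Order.succ α) = oscStep f ε (oscDeriv f ε H α) :=
  Ordinal.limitRecOn_succ ..

theorem oscDeriv_limit (H : Set K) {α : Ordinal} (hα : Order.IsSuccLimit α) :
    oscDeriv f ε H α = ⋂ (β : Ordinal) (_ : β < α), oscDeriv f ε H β :=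
  Ordinal.limitRecOn_limit _ _ _ _ hα

theorem oscDeriv_antitone (H : Set K) : ∀ {α γ : Ordinal}, γ ≤ α →
    oscDeriv f ε H α ⊆ oscDeriv f ε H γ := by
  intro α
  induction α using Ordinal.limitRecOn with
  | zero => intro γ hγ; rw [nonpos_iff_eq_zero.1 hγ]
  | add_one α ih =>
    rw [Ordinal.add_one_eq_succ]
    intro γ hγ
    rcases hγ.lt_or_eq with hlt | rfl
    · rw [oscDeriv_succ]
      exact (oscStep_subset f ε _).trans (ih (Order.lt_succ_iff.1 hlt))
    · exact subset_rfl
  | limit α hlim ih =>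
    intro γ hγ
    rcases hγ.lt_or_eq with hlt | rfl
    · rw [oscDeriv_limit f ε H hlim]
      exact iInter₂_subset γ hlt
    · exact subset_rfl

theorem oscStep_isClosed {A : Set K} (hA : IsClosed A) : IsClosed (oscStep f ε A) := by
  refine isClosed_of_closure_subset fun x hx => ?_
  refine ⟨?_, fun U hU hxU => ?_⟩
  · have : x ∈ closure A := closure_mono (oscStep_subset f ε A) hx
    rwa [hA.closure_eq] at this
  · obtain ⟨y, hyU, hyS⟩ := mem_closure_iff.1 hx U hU hxU
    exact hyS.2 U hU hyU

theorem oscDeriv_isClosed {H : Set K} (hH : IsClosed H) (α : Ordinal) :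
    IsClosed (oscDeriv f ε H α) := by
  induction α using Ordinal.limitRecOn with
  | zero => rwa [oscDeriv_zero]
  | add_one α ih => rw [Ordinal.add_one_eq_succ, oscDeriv_succ]; exact oscStep_isClosed f ε ih
  | limit α hlim ih =>
    rw [oscDeriv_limit f ε H hlim]
    exact isClosed_iInter fun β => isClosed_iInter fun hβ => ih β hβ

end Aux

theorem exists_cont_approx {X : Type*} [MetricSpace X] (f : X → ℝ) (ε : ℝ)
    (hosc : ∀ x : X, ∃ U : Set X, IsOpen U ∧ x ∈ U ∧ ∀ y ∈ U, ∀ z ∈ U, |f y - f z| ≤ ε) :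
    ∃ g : X → ℝ, Continuous g ∧ ∀ x, |g x - f x| ≤ ε := by
  classical
  choose U hUo hUx hUosc using hosc
  obtain ⟨ρ, hρ⟩ := PartitionOfUnity.exists_isSubordinate (s := (Set.univ : Set X))
    isClosed_univ U hUo (fun x _ => mem_iUnion.2 ⟨x, hUx x⟩)
  refine ⟨fun x => ∑ᶠ i, ρ i x • f i, ?_, ?_⟩
  · exact hρ.continuous_finsum_smul hUo fun i => continuousOn_const
  · intro x
    have hs := ρ.sum_finsupport (mem_univ x)
    show |∑ᶠ i, ρ i x • f i - f x| ≤ ε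
    rw [← ρ.sum_finsupport_smul_eq_finsum (φ := fun i _ => f i)]
    have hfx : f x = ∑ i ∈ ρ.finsupport x, ρ i x • f x := by
      rw [← Finset.sum_smul, hs, one_smul]
    rw [hfx, ← Finset.sum_sub_distrib]
    refine (Finset.abs_sum_le_sum_abs _ _).trans ?_
    have hb : ∀ i ∈ ρ.finsupport x, |ρ i x • f i - ρ i x • f x| ≤ ρ i x * ε := by
      intro i hi
      rw [← smul_sub, _root_.smul_eq_mul, abs_mul, abs_of_nonneg (ρ.nonneg i x)]
      refine mul_le_mul_of_nonneg_left ?_ (ρ.nonneg i x)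
      exact hUosc i i (hUx i) x (hρ i (subset_tsupport _ (by simpa using hi)))
    calc ∑ i ∈ ρ.finsupport x, |ρ i x • f i - ρ i x • f x|
        ≤ ∑ i ∈ ρ.finsupport x, ρ i x * ε := Finset.sum_le_sum hb
      _ = ε := by rw [← Finset.sum_mul, hs, one_mul]

theorem exists_approx_deriv {K : Type*} [MetricSpace K] (f : K → ℝ) (ε : ℝ)
    (β₀ : Ordinal) (hempty : oscDeriv f ε Set.univ β₀ = ∅) :
    ∃ g : K → ℝ, (∀ x, |g x - f x| ≤ ε) ∧
      ∀ δ : ℝ, 0 < δ → oscDeriv g δ Set.univ β₀ = ∅ := by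
  classical
  have hanti : ∀ {γ α : Ordinal}, γ ≤ α →
      oscDeriv f ε Set.univ α ⊆ oscDeriv f ε Set.univ γ :=
    fun h => oscDeriv_antitone f ε Set.univ h
  have hclosed : ∀ α, IsClosed (oscDeriv f ε Set.univ α) :=
    oscDeriv_isClosed f ε isClosed_univ
  let D : Ordinal → Set K :=
    fun α => oscDeriv f ε Set.univ α \ oscDeriv f ε Set.univ (Order.succ α)
  have hloc : ∀ (α : Ordinal), ∀ x ∈ D α, ∃ U : Set K, IsOpen U ∧ x ∈ U ∧
      (∀ y ∈ U, y ∉ oscDeriv f ε Set.univ (Order.succ α)) ∧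
      ∀ y ∈ U ∩ oscDeriv f ε Set.univ α, ∀ z ∈ U ∩ oscDeriv f ε Set.univ α,
        |f y - f z| < ε := by
    intro α x hx
    obtain ⟨hx1, hx2⟩ := hx
    have hx2' := hx2
    rw [oscDeriv_succ f ε Set.univ α] at hx2
    rw [oscStep, mem_setOf_eq, not_and] at hx2
    have hP := hx2 hx1
    push_neg at hP
    obtain ⟨U, hUo, hxU, hosc⟩ := hP
    refine ⟨U ∩ (oscDeriv f ε Set.univ (Order.succ α))ᶜ,
      hUo.inter (hclosed _).isOpen_compl, ⟨hxU, hx2'⟩,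
      fun y hy => hy.2, fun y hy z hz => hosc y ⟨hy.1.1, hy.2⟩ z ⟨hz.1.1, hz.2⟩⟩
  have happrox : ∀ α : Ordinal, ∃ gα : ↥(D α) → ℝ, Continuous gα ∧
      ∀ z : ↥(D α), |gα z - f z.1| ≤ ε := by
    intro α
    refine exists_cont_approx (fun z : ↥(D α) => f z.1) ε ?_
    intro z
    obtain ⟨U, hUo, hzU, hUavoid, hUosc⟩ := hloc α z.1 z.2
    refine ⟨Subtype.val ⁻¹' U, hUo.preimage continuous_subtype_val, hzU, ?_⟩
    intro y hy w hw
    exact (hUosc y.1 ⟨hy, y.2.1⟩ w.1 ⟨hw, w.2.1⟩).le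
  choose gfun hgc hga using happrox
  have hemptysucc : ∀ x : K, x ∉ oscDeriv f ε Set.univ (Order.succ β₀) := by
    intro x hx
    have := hanti (Order.le_succ β₀) hx
    rw [hempty] at this; exact this
  let r : K → Ordinal := fun x => sInf {γ | x ∉ oscDeriv f ε Set.univ (Order.succ γ)}
  have hr1 : ∀ x, x ∉ oscDeriv f ε Set.univ (Order.succ (r x)) := by
    intro x
    have hm : (r x) ∈ {γ | x ∉ oscDeriv f ε Set.univ (Order.succ γ)} :=
      csInf_mem ⟨β₀, hemptysucc x⟩
    exact hm
  have hrlt : ∀ x γ, γ < r x → x ∈ oscDeriv f ε Set.univ (Order.succ γ) := by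
    intro x γ hγ
    by_contra hc
    have hm : γ ∈ {γ | x ∉ oscDeriv f ε Set.univ (Order.succ γ)} := hc
    exact absurd (csInf_le' hm) hγ.not_ge
  have hr2 : ∀ x, x ∈ oscDeriv f ε Set.univ (r x) := by
    intro x
    rcases Ordinal.zero_or_succ_or_isSuccLimit (r x) with h0 | ⟨a, ha⟩ | hlim
    · rw [h0, oscDeriv_zero]; trivial
    · have hlt : a < r x := by rw [← ha]; exact Order.lt_succ a
      rw [← ha]; exact hrlt x a hlt
    · rw [oscDeriv_limit f ε Set.univ hlim]
      exact mem_iInter₂.2 fun β hβ => hanti (Order.le_succ β) (hrlt x β hβ)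
  have hmemD : ∀ x : K, x ∈ D (r x) := fun x => ⟨hr2 x, hr1 x⟩
  set g : K → ℝ := fun x => gfun (r x) ⟨x, hmemD x⟩ with hgdef
  have hval : ∀ (α : Ordinal) (x : K) (hx : x ∈ D α), g x = gfun α ⟨x, hx⟩ := by
    intro α x hx
    have hle : r x ≤ α := by
      have hm : α ∈ {γ | x ∉ oscDeriv f ε Set.univ (Order.succ γ)} := hx.2
      exact csInf_le' hm
    have hge : α ≤ r x := by
      by_contra hc
      push_neg at hc
      exact hr1 x (hanti (Order.succ_le_of_lt hc) hx.1)
    have e : r x = α := le_antisymm hle hge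
    subst e
    rfl
  have key : ∀ (δ : ℝ), 0 < δ → ∀ α : Ordinal,
      oscDeriv g δ Set.univ α ⊆ oscDeriv f ε Set.univ α := by
    intro δ hδ α
    induction α using Ordinal.limitRecOn with
    | zero => rw [oscDeriv_zero, oscDeriv_zero]
    | add_one α ih =>
      rw [Ordinal.add_one_eq_succ, oscDeriv_succ g δ, oscDeriv_succ f ε]
      intro x hx
      by_contra hxn
      have hxn' : x ∉ oscDeriv f ε Set.univ (Order.succ α) := by
        rw [oscDeriv_succ f ε]; exact hxn
      have hxD : x ∈ D α := ⟨ih hx.1, hxn'⟩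
      set z₀ : ↥(D α) := ⟨x, hxD⟩ with hz₀
      have hV : IsOpen ((gfun α) ⁻¹' Metric.ball (gfun α z₀) (δ/2)) :=
        Metric.isOpen_ball.preimage (hgc α)
      obtain ⟨W, hWo, hWeq⟩ := isOpen_induced_iff.1 hV
      have hxW : x ∈ W := by
        have hmem : z₀ ∈ Subtype.val ⁻¹' W := by
          rw [hWeq]
          exact Metric.mem_ball_self (by linarith)
        exact hmem
      obtain ⟨x₁, hx₁, x₂, hx₂, hd⟩ := hx.2 (W ∩ (oscDeriv f ε Set.univ (Order.succ α))ᶜ)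
        (hWo.inter (hclosed _).isOpen_compl) ⟨hxW, hxn'⟩
      have hmem : ∀ y : K,
          y ∈ (W ∩ (oscDeriv f ε Set.univ (Order.succ α))ᶜ) ∩ oscDeriv g δ Set.univ α →
          |g y - gfun α z₀| < δ/2 := by
        intro y hy
        have hyD : y ∈ D α := ⟨ih hy.2, hy.1.2⟩
        have hyW : (⟨y, hyD⟩ : ↥(D α)) ∈ Subtype.val ⁻¹' W := hy.1.1
        rw [hWeq] at hyW
        have hb : |gfun α ⟨y, hyD⟩ - gfun α z₀| < δ/2 := by
          simpa [Real.dist_eq] using hyW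
        rwa [hval α y hyD]
      have h1 := hmem x₁ hx₁
      have h2 := hmem x₂ hx₂
      have hlt : |g x₁ - g x₂| < δ := by
        have h3 := abs_sub_le (g x₁) (gfun α z₀) (g x₂)
        have h4 : |gfun α z₀ - g x₂| = |g x₂ - gfun α z₀| := abs_sub_comm _ _
        linarith
      exact absurd hd (not_le.2 hlt)
    | limit α hlim ih =>
      rw [oscDeriv_limit g δ Set.univ hlim, oscDeriv_limit f ε Set.univ hlim]
      exact fun x hx => mem_iInter₂.2 fun β hβ => ih β hβ (mem_iInter₂.1 hx β hβ)
  refine ⟨g, fun x => hga (r x) ⟨x, hmemD x⟩, fun δ hδ => ?_⟩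
  have hsub := key δ hδ β₀
  rw [hempty] at hsub
  exact eq_empty_of_subset_empty hsub

theorem statement8 {K : Type*} [MetricSpace K] [CompactSpace K]
    (f : K → ℝ) (hf : BaireOne f) (β₀ : Ordinal) (hβ₀1 : 1 ≤ β₀)
    (hβ₀ : β₀ < (Cardinal.aleph 1).ord) (ε : ℝ) (hε : 0 < ε)
    (h : betaEpsOn f ε Set.univ ≤ β₀) :
    ∃ g : K → ℝ, (∀ x, |g x - f x| ≤ ε) ∧ beta g ≤ β₀ := by
  classical
  have hexEmpty : ∃ α, oscDeriv f ε Set.univ α = ∅ := by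
    by_contra hc
    simp only [betaEpsOn, emptyIndex] at h
    rw [dif_neg hc] at h
    exact absurd h (not_le.2 hβ₀)
  have hle : sInf {α | oscDeriv f ε Set.univ α = ∅} ≤ β₀ := by
    simp only [betaEpsOn, emptyIndex] at h
    rwa [dif_pos hexEmpty] at h
  have hempty : oscDeriv f ε Set.univ β₀ = ∅ := by
    have h2 : oscDeriv f ε Set.univ (sInf {α | oscDeriv f ε Set.univ α = ∅}) = ∅ :=
      csInf_mem hexEmpty
    have h3 := oscDeriv_antitone f ε Set.univ hle
    rw [h2] at h3
    exact eq_empty_of_subset_empty h3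
  obtain ⟨g, hg1, hg2⟩ := exists_approx_deriv f ε β₀ hempty
  refine ⟨g, hg1, ?_⟩
  have hne : Nonempty {e : ℝ // 0 < e} := ⟨⟨1, one_pos⟩⟩
  rw [beta, betaOn]
  refine ciSup_le fun δ => ?_
  have hgE : oscDeriv g δ.1 Set.univ β₀ = ∅ := hg2 δ.1 δ.2
  have heq : betaEpsOn g δ.1 Set.univ = sInf {α | oscDeriv g δ.1 Set.univ α = ∅} := by
    simp only [betaEpsOn, emptyIndex]
    rw [dif_pos ⟨β₀, hgE⟩]
  rw [heq]
  have hm : β₀ ∈ {α | oscDeriv g δ.1 Set.univ α = ∅} := hgE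
  exact csInf_le' hm
end

section
/- Let K be a compact metric space, (fₙ) a sequence of real-valued functions on K, and (gₙ) a convex block combination of (fₙ) (possibly after deleting finitely many initial terms of (gₙ)). Then γ((gₙ),ε) ≤ γ((fₙ),ε) for all ε > 0. -/
open Filter Topology Set Ordinal

section Aux

variable {K : Type*} [TopologicalSpace K] {f : ℕ → K → ℝ} {ε : ℝ} {H A B : Set K}

lemma seqDeriv_zero (f : ℕ → K → ℝ) (ε : ℝ) (H : Set K) : seqDeriv f ε H 0 = H :=
  Ordinal.limitRecOn_zero ..

lemma seqDeriv_succ (f : ℕ → K → ℝ) (ε : ℝ) (H : Set K) (α : Ordinal) :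
    seqDeriv f ε H (Order.succ α) = seqStep f ε (seqDeriv f ε H α) :=
  Ordinal.limitRecOn_succ ..

lemma seqDeriv_limit (f : ℕ → K → ℝ) (ε : ℝ) (H : Set K) {α : Ordinal} (hα : Order.IsSuccLimit α) :
    seqDeriv f ε H α = ⋂ (β : Ordinal) (_ : β < α), seqDeriv f ε H β :=
  Ordinal.limitRecOn_limit _ _ _ _ hα

lemma seqStep_subset : seqStep f ε A ⊆ A := fun _ hx => hx.1

lemma seqDeriv_anti (f : ℕ → K → ℝ) (ε : ℝ) (H : Set K) :
    ∀ α β : Ordinal, β ≤ α → seqDeriv f ε H α ⊆ seqDeriv f ε H β := by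
  intro α
  induction α using Ordinal.limitRecOn with
  | zero => intro β hβ; rw [nonpos_iff_eq_zero.mp hβ]
  | add_one α ih =>
    rw [Ordinal.add_one_eq_succ]
    intro β hβ
    rcases eq_or_lt_of_le hβ with rfl | hlt
    · exact subset_rfl
    · have h1 : β ≤ α := Order.lt_succ_iff.mp hlt
      rw [seqDeriv_succ]
      exact (seqStep_subset).trans (ih β h1)
  | limit α hlim ih =>
    intro β hβ
    rcases eq_or_lt_of_le hβ with rfl | hlt
    · exact subset_rfl
    · rw [seqDeriv_limit f ε H hlim]
      exact Set.iInter₂_subset β hlt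

lemma seqDeriv_stab {α : Ordinal}
    (hstab : seqDeriv f ε H (Order.succ α) = seqDeriv f ε H α) :
    ∀ β : Ordinal, α ≤ β → seqDeriv f ε H β = seqDeriv f ε H α := by
  intro β
  induction β using Ordinal.limitRecOn with
  | zero => intro hβ; rw [nonpos_iff_eq_zero.mp hβ]
  | add_one β ih =>
    rw [Ordinal.add_one_eq_succ]
    intro hβ
    rcases eq_or_lt_of_le hβ with h | hlt
    · rw [← h]
    · have h1 : α ≤ β := Order.lt_succ_iff.mp hlt
      rw [seqDeriv_succ, ih h1, ← seqDeriv_succ, hstab]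
  | limit β hlim ih =>
    intro hβ
    rcases eq_or_lt_of_le hβ with h | hlt
    · rw [← h]
    · rw [seqDeriv_limit f ε H hlim]
      apply subset_antisymm
      · exact Set.iInter₂_subset α hlt
      · intro x hx
        simp only [Set.mem_iInter]
        intro δ hδ
        rcases le_or_gt α δ with h1 | h1
        · rw [ih δ hδ h1]; exact hx
        · exact seqDeriv_anti f ε H α δ h1.le hx

lemma isClosed_seqStep (hA : IsClosed A) : IsClosed (seqStep f ε A) := by
  refine isClosed_of_closure_subset ?_
  intro x hx
  have hxA : x ∈ A := hA.closure_subset ((closure_mono (seqStep_subset)) hx)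
  refine ⟨hxA, fun U hU hxU m => ?_⟩
  obtain ⟨y, hyU, hy⟩ := mem_closure_iff.mp hx U hU hxU
  exact hy.2 U hU hyU m

lemma isClosed_seqDeriv (f : ℕ → K → ℝ) (ε : ℝ) (H : Set K) (hH : IsClosed H) :
    ∀ α : Ordinal, IsClosed (seqDeriv f ε H α) := by
  intro α
  induction α using Ordinal.limitRecOn with
  | zero => rw [seqDeriv_zero]; exact hH
  | add_one α ih => rw [Ordinal.add_one_eq_succ, seqDeriv_succ]; exact isClosed_seqStep ih
  | limit α hlim ih =>
    rw [seqDeriv_limit f ε H hlim]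
    exact isClosed_iInter fun β => isClosed_iInter fun hβ => ih β hβ

end Aux

open Finset in
lemma convex_block_pair {K : Type*} {f g' : ℕ → K → ℝ} {a : ℕ → ℝ} {p : ℕ → ℕ}
    (ha : ∀ k, 0 ≤ a k) (hp : StrictMono p)
    (hsum : ∀ n, ∑ k ∈ Finset.Ioc (p n) (p (n + 1)), a k = 1)
    (hg : ∀ n x, g' n x = ∑ k ∈ Finset.Ioc (p n) (p (n + 1)), a k * f k x)
    {ε : ℝ} {n₁ n₂ : ℕ} {x : K} (hosc : ε ≤ |g' n₁ x - g' n₂ x|) :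
    ∃ k ∈ Finset.Ioc (p n₁) (p (n₁ + 1)), ∃ j ∈ Finset.Ioc (p n₂) (p (n₂ + 1)),
      ε ≤ |f k x - f j x| := by
  set I₁ := Finset.Ioc (p n₁) (p (n₁ + 1)) with hI₁
  set I₂ := Finset.Ioc (p n₂) (p (n₂ + 1)) with hI₂
  have hne1 : I₁.Nonempty := ⟨p n₁ + 1, by
    simp only [hI₁, Finset.mem_Ioc]
    exact ⟨Nat.lt_succ_self _, Nat.succ_le_of_lt (hp (Nat.lt_succ_self _))⟩⟩
  have hne2 : I₂.Nonempty := ⟨p n₂ + 1, by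
    simp only [hI₂, Finset.mem_Ioc]
    exact ⟨Nat.lt_succ_self _, Nat.succ_le_of_lt (hp (Nat.lt_succ_self _))⟩⟩
  have hne : (I₁ ×ˢ I₂).Nonempty := hne1.product hne2
  set M := (I₁ ×ˢ I₂).sup' hne (fun q => |f q.1 x - f q.2 x|) with hM
  have key : g' n₁ x - g' n₂ x = ∑ k ∈ I₁, ∑ j ∈ I₂, a k * a j * (f k x - f j x) := by
    rw [hg, hg]
    calc (∑ k ∈ I₁, a k * f k x) - ∑ j ∈ I₂, a j * f j x
        = (∑ k ∈ I₁, a k * f k x) * (∑ j ∈ I₂, a j)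
          - (∑ k ∈ I₁, a k) * (∑ j ∈ I₂, a j * f j x) := by
          rw [hsum n₁, hsum n₂]; ring
      _ = ∑ k ∈ I₁, ∑ j ∈ I₂, a k * a j * (f k x - f j x) := by
          rw [Finset.sum_mul_sum, Finset.sum_mul_sum, ← Finset.sum_sub_distrib]
          refine Finset.sum_congr rfl fun k _ => ?_
          rw [← Finset.sum_sub_distrib]
          refine Finset.sum_congr rfl fun j _ => ?_
          ring
  have hbound : |g' n₁ x - g' n₂ x| ≤ M := by
    rw [key]
    calc |∑ k ∈ I₁, ∑ j ∈ I₂, a k * a j * (f k x - f j x)|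
        ≤ ∑ k ∈ I₁, |∑ j ∈ I₂, a k * a j * (f k x - f j x)| := Finset.abs_sum_le_sum_abs _ _
      _ ≤ ∑ k ∈ I₁, ∑ j ∈ I₂, |a k * a j * (f k x - f j x)| :=
          Finset.sum_le_sum fun k _ => Finset.abs_sum_le_sum_abs _ _
      _ ≤ ∑ k ∈ I₁, ∑ j ∈ I₂, a k * a j * M := by
          refine Finset.sum_le_sum fun k hk => Finset.sum_le_sum fun j hj => ?_
          rw [abs_mul, abs_mul, abs_of_nonneg (ha k), abs_of_nonneg (ha j)]
          refine mul_le_mul_of_nonneg_left ?_ (mul_nonneg (ha k) (ha j))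
          exact Finset.le_sup' (fun q : ℕ × ℕ => |f q.1 x - f q.2 x|) (b := (k, j))
            (Finset.mem_product.mpr ⟨hk, hj⟩)
      _ = M := by
          have e : ∀ k ∈ I₁, ∑ j ∈ I₂, a k * a j * M = a k * M := by
            intro k _
            rw [show (fun j => a k * a j * M) = fun j => a k * M * a j by funext j; ring]
            rw [← Finset.mul_sum, hsum n₂, mul_one]
          rw [Finset.sum_congr rfl e, ← Finset.sum_mul, hsum n₁, one_mul]
  obtain ⟨q, hq, hqM⟩ := Finset.exists_mem_eq_sup' hne (fun q => |f q.1 x - f q.2 x|)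
  obtain ⟨hq1, hq2⟩ := Finset.mem_product.mp hq
  exact ⟨q.1, hq1, q.2, hq2, by rw [← hqM]; exact hosc.trans hbound⟩

section Aux2

open Set TopologicalSpace

variable {K : Type*} [TopologicalSpace K]

lemma seqStep_block {f g : ℕ → K → ℝ} {m : ℕ}
    (hcb : ConvexBlockOf (fun n => g (n + m)) f) {ε : ℝ} {A B : Set K} (hAB : A ⊆ B) :
    seqStep g ε A ⊆ seqStep f ε B := by
  obtain ⟨a, p, ha, hp, hp0, hsum, hg⟩ := hcb
  rintro x ⟨hxA, hx⟩
  refine ⟨hAB hxA, fun U hU hxU M => ?_⟩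
  obtain ⟨n₁, n₂, hn₂, hn₁₂, x', hx', hosc⟩ := hx U hU hxU (M + m)
  have h2 : m ≤ n₂ := le_trans (Nat.le_add_left m M) hn₂.le
  have h1 : m ≤ n₁ := h2.trans hn₁₂.le
  have e2 : n₂ - m + m = n₂ := Nat.sub_add_cancel h2
  have e1 : n₁ - m + m = n₁ := Nat.sub_add_cancel h1
  have hosc' : ε ≤ |(fun n => g (n + m)) (n₁ - m) x' - (fun n => g (n + m)) (n₂ - m) x'| := by
    simpa only [e1, e2] using hosc
  obtain ⟨k, hk, j, hj, hfk⟩ := convex_block_pair ha hp hsum hg hosc'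
  rw [Finset.mem_Ioc] at hk hj
  refine ⟨k, j, ?_, ?_, x', ⟨hx'.1, hAB hx'.2⟩, hfk⟩
  · -- M < j
    have : n₂ - m ≤ p (n₂ - m) := hp.le_apply
    omega
  · -- j < k
    have hmono : p (n₂ - m + 1) ≤ p (n₁ - m) := hp.monotone (by omega)
    omega

lemma seqDeriv_block_subset {f g : ℕ → K → ℝ} {m : ℕ}
    (hcb : ConvexBlockOf (fun n => g (n + m)) f) (ε : ℝ) :
    ∀ α : Ordinal, seqDeriv g ε Set.univ α ⊆ seqDeriv f ε Set.univ α := by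
  intro α
  induction α using Ordinal.limitRecOn with
  | zero => rw [seqDeriv_zero, seqDeriv_zero]
  | add_one α ih => rw [Ordinal.add_one_eq_succ, seqDeriv_succ, seqDeriv_succ]; exact seqStep_block hcb ih
  | limit α hlim ih =>
    rw [seqDeriv_limit g ε Set.univ hlim, seqDeriv_limit f ε Set.univ hlim]
    exact Set.iInter_mono fun β => Set.iInter_mono' fun hβ => ⟨hβ, ih β hβ⟩

universe uOrd uK in
lemma emptyIndex_seqDeriv_le_aleph_one {K : Type uK} [TopologicalSpace K]
    [SecondCountableTopology K] (f : ℕ → K → ℝ) (ε : ℝ) :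
    emptyIndex (seqDeriv f ε Set.univ : Ordinal.{uOrd} → Set K) ≤ (Cardinal.aleph 1).ord := by
  classical
  set S := seqDeriv f ε (Set.univ : Set K) with hS
  unfold emptyIndex
  split_ifs with h
  · by_contra hlt
    push_neg at hlt
    have hSinf : S (sInf {α | S α = ∅}) = ∅ := csInf_mem h
    have hstrict : ∀ α : Ordinal, α < (Cardinal.aleph 1).ord → S (Order.succ α) ⊂ S α := by
      intro α hα
      refine HasSubset.Subset.ssubset_of_ne
        (seqDeriv_anti f ε Set.univ (Order.succ α) α (Order.le_succ α)) ?_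
      intro heq
      have hstab := seqDeriv_stab heq (sInf {α | S α = ∅}) (le_of_lt (hα.trans hlt))
      rw [← hS] at hstab
      have hmem : α ∈ {α | S α = ∅} := by
        show S α = ∅
        rw [← hstab]; exact hSinf
      exact absurd (csInf_le (OrderBot.bddBelow _) hmem) (not_le.mpr (hα.trans hlt))
    have hfun : ∀ α : Set.Iio ((Cardinal.aleph 1).ord),
        ∃ U : Set K, U ∈ countableBasis K ∧ (U ∩ S α).Nonempty ∧
          U ∩ S (Order.succ (α : Ordinal)) = ∅ := by
      rintro ⟨α, hα⟩
      obtain ⟨y, hy1, hy2⟩ := Set.exists_of_ssubset (hstrict α hα)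
      have hopen : IsOpen (S (Order.succ α))ᶜ :=
        (isClosed_seqDeriv f ε Set.univ isClosed_univ (Order.succ α)).isOpen_compl
      obtain ⟨V, hVb, hyV, hVsub⟩ :=
        (isBasis_countableBasis K).exists_subset_of_mem_open hy2 hopen
      refine ⟨V, hVb, ⟨y, hyV, hy1⟩, ?_⟩
      rw [Set.eq_empty_iff_forall_notMem]
      rintro z ⟨hz1, hz2⟩
      exact hVsub hz1 hz2
    choose U hUb hUx hUd using hfun
    have haux : ∀ α β : Set.Iio ((Cardinal.aleph 1).ord), (α : Ordinal) < β → U α ≠ U β := by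
      intro α β hab hEq
      obtain ⟨y, hyU, hyS⟩ := hUx β
      have h1 : y ∈ S (Order.succ (α : Ordinal)) :=
        seqDeriv_anti f ε Set.univ β (Order.succ α) (Order.succ_le_of_lt hab) hyS
      have : y ∈ U α ∩ S (Order.succ (α : Ordinal)) := ⟨hEq ▸ hyU, h1⟩
      rw [hUd α] at this
      exact this
    have hinj : Function.Injective U := by
      intro α β hEq
      rcases lt_trichotomy (α : Ordinal) (β : Ordinal) with hlt' | heq' | hlt'
      · exact absurd hEq (haux α β hlt')
      · exact Subtype.ext heq'
      · exact absurd hEq.symm (haux β α hlt')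
    have hemb : Nonempty (Set.Iio ((Cardinal.aleph 1).ord) ↪ (countableBasis K : Set (Set K))) :=
      ⟨⟨fun α => ⟨U α, hUb α⟩, fun a b hab => hinj (congrArg Subtype.val hab)⟩⟩
    have h1 := Cardinal.lift_mk_le'.mpr hemb
    have h2 : Cardinal.mk ↥(countableBasis K) ≤ Cardinal.aleph0 :=
      (countable_countableBasis K).le_aleph0
    have h3 : Cardinal.mk ↥(Set.Iio ((Cardinal.aleph 1).ord : Ordinal.{uOrd})) =
        Cardinal.lift.{uOrd + 1, uOrd} (Cardinal.aleph 1) := by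
      rw [Ordinal.mk_Iio_ordinal, Cardinal.card_ord]
    rw [h3] at h1
    have h4 := h1.trans (Cardinal.lift_le.mpr h2)
    simp only [Cardinal.lift_aleph0, Cardinal.lift_le_aleph0] at h4
    exact absurd h4 (not_le.mpr Cardinal.aleph0_lt_aleph_one)
  · exact le_rfl

end Aux2

theorem statement14 {K : Type*} [MetricSpace K] [CompactSpace K]
    (f g : ℕ → K → ℝ) (h : ∃ m : ℕ, ConvexBlockOf (fun n => g (n + m)) f)
    (ε : ℝ) (hε : 0 < ε) :
    gammaEpsOn g ε Set.univ ≤ gammaEpsOn f ε Set.univ := by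
  classical
  obtain ⟨m, hcb⟩ := h
  have hsub := seqDeriv_block_subset hcb ε
  unfold gammaEpsOn
  by_cases hf : ∃ α, seqDeriv f ε Set.univ α = ∅
  · have hg2 : ∃ α, seqDeriv g ε Set.univ α = ∅ := by
      obtain ⟨α, hα⟩ := hf
      exact ⟨α, Set.subset_empty_iff.mp (hα ▸ hsub α)⟩
    unfold emptyIndex
    rw [dif_pos hf, dif_pos hg2]
    refine csInf_le_csInf (OrderBot.bddBelow _) hf ?_
    intro α hα
    exact Set.subset_empty_iff.mp (hα ▸ hsub α)
  · have : emptyIndex (seqDeriv f ε Set.univ) = (Cardinal.aleph 1).ord := dif_neg hf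
    rw [this]
    exact emptyIndex_seqDeriv_le_aleph_one g ε
end
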